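/- arXiv:2509.23276 — 3 statements merged into one kernel-verified Lean document; each statement's English description precedes it below -/
import Mathlib

section
/- Let g(r) = (8r^4 + 4r^3 − 68r^2 − 174r − 144)/((r+3)^2 (r+1)^2). Then 4·∫_0^3 g(r) dr + e^{9/16}·∫_3^∞ e^{−r/2} r (r + 3/2) dr + 4·e^{9/16}·∫_3^∞ g(r) e^{−r/2} dr < 0. -/
/-!
On `[0, 3]` the integrand has an elementary primitive (partial fractions), giving
`∫₀³ g = 243/8 - 66 log 2 ≈ -15.37`. On `(3, ∞)` the integral of `e^{-r/2} r (r + 3/2)` is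
elementary too, and `g ≤ 8` bounds the last term by `64 e^{-15/16}`. What remains is
`243/2 - 264 log 2 + 137 e^{-15/16} < 0`, which follows from `log 2 > 0.693` and
`e^{15/16} ≥ 1 + 15/16 + (15/16)²/2 > 7/3`.
-/

open Real MeasureTheory Filter Topology Set

noncomputable def taubBoltIntegrand (r : ℝ) : ℝ :=
  (8*r^4 + 4*r^3 - 68*r^2 - 174*r - 144) / ((r+3)^2 * (r+1)^2)

-- From `g r = 8 - 54/(r+3) + 153/(2(r+3)^2) - 6/(r+1) - 17/(2(r+1)^2)`.
noncomputable def taubBoltPrimitive (r : ℝ) : ℝ :=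
  8*r - 54 * log (r+3) - (153/2) * (r+3)⁻¹ - 6 * log (r+1) + (17/2) * (r+1)⁻¹

lemma hasDerivAt_taubBoltPrimitive {r : ℝ} (h3 : r + 3 ≠ 0) (h1 : r + 1 ≠ 0) :
    HasDerivAt taubBoltPrimitive (taubBoltIntegrand r) r := by
  have d3 : HasDerivAt (fun x : ℝ => x + 3) 1 r := (hasDerivAt_id r).add_const 3
  have d1 : HasDerivAt (fun x : ℝ => x + 1) 1 r := (hasDerivAt_id r).add_const 1
  have hF := ((((hasDerivAt_id r).const_mul 8).sub ((d3.log h3).const_mul 54)).sub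
    ((d3.inv h3).const_mul (153/2))).sub ((d1.log h1).const_mul 6) |>.add
    ((d1.inv h1).const_mul (17/2))
  refine hF.congr_deriv ?_
  unfold taubBoltIntegrand
  field_simp
  ring

lemma continuousOn_taubBoltIntegrand : ContinuousOn taubBoltIntegrand (Ici 0) := by
  refine ContinuousOn.div (by fun_prop) (by fun_prop) fun r (hr : 0 ≤ r) => ?_
  positivity

lemma integral_taubBoltIntegrand_zero_three :
    ∫ r in (0:ℝ)..3, taubBoltIntegrand r = 243/8 - 66 * log 2 := by
  have hsub : uIcc (0:ℝ) 3 ⊆ Ici 0 := by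
    rw [uIcc_of_le zero_le_three]; exact Icc_subset_Ici_self
  rw [intervalIntegral.integral_eq_sub_of_hasDerivAt
    (fun r hr => have : (0:ℝ) ≤ r := hsub hr
      hasDerivAt_taubBoltPrimitive (by linarith) (by linarith))
    (continuousOn_taubBoltIntegrand.mono hsub).intervalIntegrable]
  have h6 : log 6 = log 2 + log 3 := by
    rw [show (6:ℝ) = 2 * 3 by norm_num, log_mul two_ne_zero three_ne_zero]
  have h4 : log 4 = 2 * log 2 := by
    rw [show (4:ℝ) = 2 ^ 2 by norm_num, log_pow, Nat.cast_ofNat]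
  norm_num [taubBoltPrimitive, h6, h4]
  ring

lemma abs_taubBoltIntegrand_le_eight {r : ℝ} (hr : 1 ≤ r) : |taubBoltIntegrand r| ≤ 8 := by
  have hD : (0:ℝ) < (r+3)^2 * (r+1)^2 := by positivity
  rw [taubBoltIntegrand, abs_div, abs_of_pos hD, div_le_iff₀ hD, abs_le]
  constructor <;> nlinarith [sq_nonneg r, mul_nonneg (sub_nonneg.2 hr) (sq_nonneg r)]

lemma tendsto_pow_mul_exp_neg_half (n : ℕ) :
    Tendsto (fun r : ℝ => r ^ n * exp (-r/2)) atTop (𝓝 0) := by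
  convert tendsto_rpow_mul_exp_neg_mul_atTop_nhds_zero n (1/2) one_half_pos using 2 with r
  rw [rpow_natCast]
  ring_nf

lemma integral_Ioi_exp_neg_half (a : ℝ) : ∫ r in Ioi a, exp (-r/2) = 2 * exp (-a/2) := by
  convert integral_exp_mul_Ioi (a := -1/2) (by norm_num) a using 1 <;> ring_nf

lemma integrableOn_exp_neg_half (a : ℝ) : IntegrableOn (fun r : ℝ => exp (-r/2)) (Ioi a) := by
  convert exp_neg_integrableOn_Ioi a one_half_pos using 3
  ring_nf

lemma integral_Ioi_exp_neg_half_mul {a : ℝ} (ha : 0 ≤ a) :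
    ∫ r in Ioi a, exp (-r/2) * r * (r + 3/2) = exp (-a/2) * (2*a^2 + 11*a + 22) := by
  have hderiv : ∀ x ∈ Ici a, HasDerivAt (fun r => -(exp (-r/2) * (2*r^2 + 11*r + 22)))
      (exp (-x/2) * x * (x + 3/2)) x := fun x _ => by
    have he : HasDerivAt (fun r : ℝ => exp (-r/2)) (exp (-x/2) * (-1/2)) x :=
      (hasDerivAt_exp _).comp x ((hasDerivAt_neg x).div_const 2)
    have hp : HasDerivAt (fun r : ℝ => 2*r^2 + 11*r + 22) (2*(2*x) + 11) x := by
      simpa using (((hasDerivAt_pow 2 x).const_mul 2).add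
        ((hasDerivAt_id x).const_mul 11)).add_const 22
    exact (he.mul hp).neg.congr_deriv (by ring)
  have hlim : Tendsto (fun r => -(exp (-r/2) * (2*r^2 + 11*r + 22))) atTop (𝓝 0) := by
    convert (((tendsto_pow_mul_exp_neg_half 2).const_mul 2).add
      ((tendsto_pow_mul_exp_neg_half 1).const_mul 11) |>.add
      ((tendsto_pow_mul_exp_neg_half 0).const_mul 22)).neg using 2 with r
    · ring
    · simp
  rw [integral_Ioi_of_hasDerivAt_of_nonneg' hderiv
    (fun x (hx : a < x) => by have := ha.trans hx.le; positivity) hlim]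
  ring

lemma integral_Ioi_taubBoltIntegrand_mul_exp_le {a : ℝ} (ha : 1 ≤ a) :
    ∫ r in Ioi a, taubBoltIntegrand r * exp (-r/2) ≤ 16 * exp (-a/2) := by
  have hbound : ∀ r ∈ Ioi a, |taubBoltIntegrand r| ≤ 8 := fun r (hr : a < r) =>
    abs_taubBoltIntegrand_le_eight (ha.trans hr.le)
  have hint : IntegrableOn (fun r => taubBoltIntegrand r * exp (-r/2)) (Ioi a) :=
    (integrableOn_exp_neg_half a).bdd_mul
      ((continuousOn_taubBoltIntegrand.mono (Ioi_subset_Ici_self.trans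
        (Ici_subset_Ici.2 (by linarith)))).aestronglyMeasurable measurableSet_Ioi)
      ((ae_restrict_mem measurableSet_Ioi).mono hbound)
  calc ∫ r in Ioi a, taubBoltIntegrand r * exp (-r/2)
      ≤ ∫ r in Ioi a, 8 * exp (-r/2) :=
        setIntegral_mono_on hint ((integrableOn_exp_neg_half a).const_mul 8) measurableSet_Ioi
          fun r hr => mul_le_mul_of_nonneg_right (abs_le.1 (hbound r hr)).2 (exp_pos _).le
    _ = 16 * exp (-a/2) := by rw [integral_const_mul, integral_Ioi_exp_neg_half]; ring

lemma exp_neg_fifteen_div_sixteen_lt : exp (-15/16) < 3/7 := by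
  have h := quadratic_le_exp_of_nonneg (x := 15/16) (by norm_num)
  rw [show (-15/16 : ℝ) = -(15/16) by norm_num, exp_neg, inv_lt_comm₀ (exp_pos _) (by norm_num)]
  linarith

/-- The quantitative core of the linear instability of the Taub-Bolt metric:
`4·∫_0^3 g + e^{9/16}·∫_3^∞ e^{−r/2} r (r+3/2) dr + 4·e^{9/16}·∫_3^∞ g(r) e^{−r/2} dr < 0`,
where `g(r) = (8r^4 + 4r^3 − 68r^2 − 174r − 144)/((r+3)^2 (r+1)^2)`. -/
theorem stmt0
    (g : ℝ → ℝ)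
    (hg : ∀ r : ℝ, g r =
      (8*r^4 + 4*r^3 - 68*r^2 - 174*r - 144) / ((r+3)^2 * (r+1)^2)) :
    4 * (∫ r in (0:ℝ)..3, g r)
      + Real.exp (9/16) * (∫ r in Set.Ioi (3:ℝ), Real.exp (-r/2) * r * (r + 3/2))
      + 4 * Real.exp (9/16) * (∫ r in Set.Ioi (3:ℝ), g r * Real.exp (-r/2)) < 0 := by
  obtain rfl : g = taubBoltIntegrand := funext hg
  have htail := mul_le_mul_of_nonneg_left
    (integral_Ioi_taubBoltIntegrand_mul_exp_le (a := 3) (by norm_num))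
    (exp_pos (9/16)).le
  have hexp : exp (9/16) * exp (-3/2) = exp (-15/16) := by rw [← exp_add]; norm_num
  rw [integral_taubBoltIntegrand_zero_three, integral_Ioi_exp_neg_half_mul (by norm_num)]
  linarith [log_two_gt_d9, exp_neg_fifteen_div_sixteen_lt]
end

section
/- Let n > 0 be a real number and define K(r) = (5 r^3 + 18 n r^2 + 27 n^2 r + 18 n^3) / (2 n (r+3n)^3 (r+n)^3). Then for all r ≥ n one has 0 < K(r) ≤ 34/(n r^3). -/
/-- Decay of the Taub-Bolt sectional curvature
`K(r) = (5r^3 + 18nr^2 + 27n^2 r + 18n^3)/(2n(r+3n)^3(r+n)^3)`: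
for `r ≥ n` one has `0 < K(r) ≤ 34/(n r^3)`. -/
theorem stmt11
    (n : ℝ) (hn : 0 < n)
    (K : ℝ → ℝ)
    (hK : ∀ r : ℝ, K r =
      (5*r^3 + 18*n*r^2 + 27*n^2*r + 18*n^3) / (2*n * (r + 3*n)^3 * (r + n)^3)) :
    ∀ r : ℝ, n ≤ r → 0 < K r ∧ K r ≤ 34 / (n * r^3) := by
  intro r hr
  have hr0 : 0 < r := lt_of_lt_of_le hn hr
  have h1 : 0 < r + 3*n := by linarith
  have h2 : 0 < r + n := by linarith
  have hden : 0 < 2*n * (r + 3*n)^3 * (r + n)^3 := by positivity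
  have hnum : 0 < 5*r^3 + 18*n*r^2 + 27*n^2*r + 18*n^3 := by positivity
  rw [hK]
  constructor
  · positivity
  · rw [div_le_div_iff₀ hden (by positivity)]
    have ha : r^3 ≤ (r + 3*n)^3 := pow_le_pow_left₀ hr0.le (by linarith) 3
    have hb : r^3 ≤ (r + n)^3 := pow_le_pow_left₀ hr0.le (by linarith) 3
    have hc : r^3 * r^3 ≤ (r + 3*n)^3 * (r + n)^3 :=
      mul_le_mul ha hb (by positivity) (by positivity)
    have e1 : n * r^2 ≤ r^3 := by nlinarith
    have e2 : n^2 * r ≤ r^3 := by nlinarith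
    have e3 : n^3 ≤ r^3 := pow_le_pow_left₀ hn.le hr 3
    nlinarith [mul_le_mul_of_nonneg_left hc (by positivity : (0:ℝ) ≤ 68 * n),
      pow_pos hr0 3, mul_pos hn (pow_pos hr0 3),
      mul_le_mul_of_nonneg_right e1 (mul_pos hn (pow_pos hr0 3)).le,
      mul_le_mul_of_nonneg_right e2 (mul_pos hn (pow_pos hr0 3)).le,
      mul_le_mul_of_nonneg_right e3 (mul_pos hn (pow_pos hr0 3)).le]
end

section
/- Let λ > 0 and r_1 ∈ ℝ. Suppose U : ℝ → ℝ is differentiable on [r_1, ∞) and satisfies U'(r) ≥ λ/4 − 2 U(r)^2 for all r ≥ r_1. Then for every ε > 0 there exists R ≥ r_1 such that U(r)^2 ≥ λ/8 − ε for all r ≥ R. -/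
open Set Filter Topology

/-- Barrier/persistence lemma: if `b ^ 2 = lam/8 - ε` and `U R ≥ b`, then `U r ≥ b`
for all `r ≥ R`, since at any downward crossing the derivative is `≥ 2ε > 0`. -/
lemma persist13 (lam ε : ℝ) (hε : 0 < ε) (U U' : ℝ → ℝ) (R : ℝ)
    (hU : ∀ r : ℝ, R ≤ r → HasDerivAt U (U' r) r)
    (hU' : ∀ r : ℝ, R ≤ r → lam/4 - 2 * (U r)^2 ≤ U' r)
    (b : ℝ) (hb : b ^ 2 = lam/8 - ε) (hUR : b ≤ U R) :
    ∀ r : ℝ, R ≤ r → b ≤ U r := by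
  intro r hr
  by_contra hlt
  push_neg at hlt
  have hcont : ContinuousOn U (Icc R r) := fun x hx =>
    (hU x hx.1).continuousAt.continuousWithinAt
  set S : Set ℝ := Icc R r ∩ U ⁻¹' Ici b with hSdef
  have hSne : S.Nonempty := ⟨R, ⟨le_refl R, hr⟩, hUR⟩
  have hSbdd : BddAbove S := ⟨r, fun t ht => ht.1.2⟩
  have hScl : IsClosed S :=
    hcont.preimage_isClosed_of_isClosed isClosed_Icc isClosed_Ici
  set s := sSup S with hs
  have hsS : s ∈ S := hScl.csSup_mem hSne hSbdd
  have hRs : R ≤ s := hsS.1.1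
  have hsr' : s ≤ r := hsS.1.2
  have hbs : b ≤ U s := hsS.2
  have hsr : s < r := lt_of_le_of_ne hsr' (fun h => absurd hbs (by rw [h]; exact not_le.2 hlt))
  have hband : ∀ t, t ∈ Ioc s r → U t < b := by
    intro t ht
    by_contra hge
    push_neg at hge
    have : t ∈ S := ⟨⟨hRs.trans ht.1.le, ht.2⟩, hge⟩
    exact absurd (le_csSup hSbdd this) (not_le.2 ht.1)
  have hIoc : Ioc s r ∈ 𝓝[>] s := Ioc_mem_nhdsGT hsr
  rcases eq_or_lt_of_le hbs with hbeq | hblt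
  · -- U s = b: derivative ≥ 2ε > 0, so U exceeds b just after s
    have hd := hU s hRs
    rw [hasDerivAt_iff_tendsto_slope] at hd
    have hpos : 0 < U' s := by
      have := hU' s hRs
      nlinarith [hbeq ▸ hb]
    have h1 : ∀ᶠ t in 𝓝[>] s, 0 < slope U s t :=
      nhdsWithin_mono s (fun x hx => ne_of_gt hx : Ioi s ⊆ {s}ᶜ)
        (hd (Ioi_mem_nhds hpos))
    obtain ⟨t, htp, htIoc⟩ := (h1.and (eventually_of_mem hIoc (fun _ h => h))).exists
    have hts : s < t := htIoc.1
    have h3 : 0 < t - s := sub_pos.2 hts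
    rw [slope_def_field] at htp
    have h2 : 0 < U t - U s := by
      have := mul_pos htp h3
      rwa [div_mul_cancel₀ _ (ne_of_gt h3)] at this
    have hbt : b < U t := by linarith [hbeq]
    exact absurd (hband t htIoc) (not_lt.2 hbt.le)
  · -- b < U s: by continuity U > b just after s
    have hc : Tendsto U (𝓝 s) (𝓝 (U s)) := (hU s hRs).continuousAt
    have h1 : ∀ᶠ t in 𝓝[>] s, b < U t :=
      nhdsWithin_le_nhds (hc (Ioi_mem_nhds hblt))
    obtain ⟨t, htp, htIoc⟩ := (h1.and (eventually_of_mem hIoc (fun _ h => h))).exists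
    exact absurd (hband t htIoc) (not_lt.2 htp.le)

/-- ODE comparison lemma for the frequency function: if `U` is differentiable on
`[r₁,∞)` with `U'(r) ≥ λ/4 − 2U(r)^2` there, then for every `ε > 0` eventually
`U(r)^2 ≥ λ/8 − ε`. -/
theorem stmt13
    (lam r₁ : ℝ) (hlam : 0 < lam)
    (U U' : ℝ → ℝ)
    (hU : ∀ r : ℝ, r₁ ≤ r → HasDerivAt U (U' r) r)
    (hU' : ∀ r : ℝ, r₁ ≤ r → lam/4 - 2 * (U r)^2 ≤ U' r) :
    ∀ ε : ℝ, 0 < ε → ∃ R : ℝ, r₁ ≤ R ∧ ∀ r : ℝ, R ≤ r → lam/8 - ε ≤ (U r)^2 := by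
  intro ε hε
  by_cases h0 : lam/8 - ε ≤ 0
  · exact ⟨r₁, le_refl _, fun r _ => h0.trans (sq_nonneg _)⟩
  push_neg at h0
  set c := Real.sqrt (lam/8 - ε) with hcdef
  have hc : 0 < c := Real.sqrt_pos.2 h0
  have hc2 : c ^ 2 = lam/8 - ε := Real.sq_sqrt h0.le
  -- restrict derivative hypotheses to any tail [R, ∞)
  by_cases hcase : ∃ R₀ : ℝ, r₁ ≤ R₀ ∧ -c < U R₀
  · obtain ⟨R₀, hR₀, hUR₀⟩ := hcase
    have hUtail : ∀ r, R₀ ≤ r → HasDerivAt U (U' r) r := fun r hr => hU r (hR₀.trans hr)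
    have hU'tail : ∀ r, R₀ ≤ r → lam/4 - 2 * (U r)^2 ≤ U' r := fun r hr => hU' r (hR₀.trans hr)
    have hlow : ∀ r, R₀ ≤ r → -c ≤ U r :=
      persist13 lam ε hε U U' R₀ hUtail hU'tail (-c) (by rw [neg_pow]; simpa using hc2) hUR₀.le
    by_cases hcase2 : ∃ R₁ : ℝ, R₀ ≤ R₁ ∧ c ≤ U R₁
    · obtain ⟨R₁, hR₁, hUR₁⟩ := hcase2
      have hg : ∀ r, R₁ ≤ r → c ≤ U r :=
        persist13 lam ε hε U U' R₁ (fun r hr => hUtail r (hR₁.trans hr))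
          (fun r hr => hU'tail r (hR₁.trans hr)) c hc2 hUR₁
      refine ⟨R₁, hR₀.trans hR₁, fun r hr => ?_⟩
      have := hg r hr
      calc lam/8 - ε = c ^ 2 := hc2.symm
        _ ≤ (U r) ^ 2 := by nlinarith
    · -- U stays in [-c, c), so U' ≥ 2ε, linear growth: contradiction
      exfalso
      push_neg at hcase2
      have hderiv : ∀ x ∈ interior (Ici R₀), 2 * ε ≤ deriv U x := by
        intro x hx
        rw [interior_Ici] at hx
        have hx' : R₀ ≤ x := le_of_lt hx
        rw [(hUtail x hx').deriv]
        have h1 := hlow x hx'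
        have h2 := (hcase2 x hx').le
        have h3 : (U x) ^ 2 ≤ c ^ 2 := by nlinarith
        have := hU'tail x hx'
        nlinarith [hc2]
      have hcont : ContinuousOn U (Ici R₀) := fun x hx =>
        (hUtail x hx).continuousAt.continuousWithinAt
      have key := (convex_Ici R₀).mul_sub_le_image_sub_of_le_deriv hcont
        (fun x hx => ((hUtail x (by rw [interior_Ici] at hx; exact hx.le)).differentiableAt).differentiableWithinAt)
        hderiv R₀ (self_mem_Ici) (R₀ + c / ε) (by
          simp only [mem_Ici]
          nlinarith [div_pos hc hε]) (by nlinarith [div_pos hc hε])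
      have hval : 2 * ε * (c / ε) ≤ U (R₀ + c / ε) - U R₀ := by
        simpa using key
      have : 2 * c ≤ U (R₀ + c / ε) - U R₀ := by
        rw [show 2 * ε * (c / ε) = 2 * c by field_simp] at hval
        exact hval
      have h4 := hcase2 (R₀ + c / ε) (by nlinarith [div_pos hc hε])
      linarith [hUR₀]
  · -- U r ≤ -c for all r ≥ r₁
    push_neg at hcase
    refine ⟨r₁, le_refl _, fun r hr => ?_⟩
    have := hcase r hr
    calc lam/8 - ε = c ^ 2 := hc2.symm
      _ ≤ (U r) ^ 2 := by nlinarith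
end
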